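/- Let n be a positive integer and c > 0, and define the peakon u(t,x) := c^{1/n} e^{−|x−ct|}. For each t let f_t(y) := (n/2) u(t,y)^{n−1} (∂_y u(t,y))^2 + (n(n+3)/(2(n+1))) u(t,y)^{n+1}, where ∂_y u(t,y) = −sgn(y−ct) u(t,y) for y ≠ ct (the value of f_t at the single point y = ct is irrelevant for the convolution below). Then for every (t,x) with x ≠ ct, u is differentiable in t and x at (t,x), the function x ↦ (g ∗ f_t)(x) is differentiable at x, and ∂_t u(t,x) + u(t,x)^n ∂_x u(t,x) + ∂_x(g ∗ f_t)(x) = 0; that is, the peakon satisfies the nonlocal form of (CH_n) away from its crest. -/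

import Mathlib

open Real MeasureTheory Filter Topology

/-- The Green function `g(x) = e^{-|x|}/2` of `1 - ∂ₓ²` on `ℝ`. -/
noncomputable def g (x : ℝ) : ℝ := Real.exp (-|x|) / 2

/-- The peakon `u(t,x) = c^{1/n} e^{-|x - ct|}`. -/
noncomputable def peakon (n : ℕ) (c t x : ℝ) : ℝ :=
  c ^ ((1 : ℝ) / (n : ℝ)) * Real.exp (-|x - c * t|)

/-- `f_t` for the peakon, with `∂_y u = -sgn(y - ct) u`. -/
noncomputable def fPeakon (n : ℕ) (c t y : ℝ) : ℝ :=
  ((n : ℝ) / 2) * peakon n c t y ^ (n - 1) * (-Real.sign (y - c * t) * peakon n c t y) ^ 2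
    + ((n : ℝ) * ((n : ℝ) + 3) / (2 * ((n : ℝ) + 1))) * peakon n c t y ^ (n + 1)

/-!
Away from the crest the peakon is a travelling wave, so `u_t = -c u_x`. Since `u_x² = u²` there,
`f_t = n(n+2)/(n+1) · u^{n+1}` almost everywhere, and `u^{n+1}` is a multiple of
`e^{-(n+1)|x-ct|}`, whose convolution with `g` is elementary. This gives
`g ∗ f_t = c u - u^{n+1}/(n+1)`, hence `∂ₓ(g ∗ f_t) = c u_x - uⁿ u_x`, which cancels `u_t + uⁿ u_x`.
-/

open Set

theorem integral_eq_Iic_add_Ioc_add_Ioi {E : Type*} [NormedAddCommGroup E] [NormedSpace ℝ E]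
    {μ : Measure ℝ} {f : ℝ → E} (hf : Integrable f μ) {a b : ℝ} (hab : a ≤ b) :
    ∫ x, f x ∂μ = (∫ x in Iic a, f x ∂μ) + (∫ x in Ioc a b, f x ∂μ) + ∫ x in Ioi b, f x ∂μ := by
  rw [← intervalIntegral.integral_Iic_add_Ioi hf.integrableOn hf.integrableOn,
    ← Ioc_union_Ioi_eq_Ioi hab, setIntegral_union (Ioc_disjoint_Ioi le_rfl) measurableSet_Ioi
      hf.integrableOn hf.integrableOn, add_assoc]

theorem integral_exp_mul_of_ne_zero {k : ℝ} (hk : k ≠ 0) (a b : ℝ) :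
    ∫ w in a..b, exp (k * w) = (exp (k * b) - exp (k * a)) / k := by
  rw [intervalIntegral.integral_comp_mul_left (fun w => exp w) hk, integral_exp, smul_eq_mul,
    inv_mul_eq_div]

theorem integrable_exp_neg_mul_abs {m : ℝ} (hm : 0 < m) :
    Integrable (fun w : ℝ => exp (-(m * |w|))) := by
  rw [← integrableOn_univ, ← Iic_union_Ioi (a := (0 : ℝ)), integrableOn_union]
  constructor
  · refine (integrableOn_exp_mul_Iic hm 0).congr_fun (fun w hw => ?_) measurableSet_Iic
    rw [abs_of_nonpos (mem_Iic.1 hw), mul_neg, neg_neg]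
  · refine (integrableOn_exp_mul_Ioi (neg_lt_zero.2 hm) 0).congr_fun (fun w hw => ?_)
      measurableSet_Ioi
    simp only [abs_of_pos (mem_Ioi.1 hw), neg_mul]

theorem integrable_g_sub_mul_exp_neg_mul_abs {m : ℝ} (hm : 0 < m) (s : ℝ) :
    Integrable (fun w : ℝ => g (s - w) * exp (-(m * |w|))) := by
  refine (integrable_exp_neg_mul_abs hm).mono' (by unfold g; fun_prop) (ae_of_all _ fun w => ?_)
  have hg : g (s - w) ≤ 1 := by
    unfold g
    linarith [exp_le_one_iff.2 (neg_nonpos.2 (abs_nonneg (s - w)))]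
  rw [norm_mul, Real.norm_of_nonneg (by unfold g; positivity), Real.norm_of_nonneg (by positivity)]
  exact mul_le_of_le_one_left (by positivity) hg

theorem integral_g_sub_mul_exp_neg_mul_abs_of_nonneg {m : ℝ} (hm : 1 < m) {s : ℝ} (hs : 0 ≤ s) :
    ∫ w, g (s - w) * exp (-(m * |w|)) = (m * exp (-s) - exp (-(m * s))) / (m ^ 2 - 1) := by
  have hleft : EqOn (fun w => g (s - w) * exp (-(m * |w|)))
      (fun w => exp (-s) / 2 * exp ((m + 1) * w)) (Iic 0) := fun w (hw : w ≤ 0) => by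
    simp only [g, abs_of_nonpos hw, abs_of_nonneg (by linarith : 0 ≤ s - w)]
    rw [div_mul_eq_mul_div, div_mul_eq_mul_div, ← exp_add, ← exp_add]
    ring_nf
  have hmid : EqOn (fun w => g (s - w) * exp (-(m * |w|)))
      (fun w => exp (-s) / 2 * exp ((1 - m) * w)) (Ioc 0 s) := fun w hw => by
    simp only [g, abs_of_pos hw.1, abs_of_nonneg (sub_nonneg.2 hw.2)]
    rw [div_mul_eq_mul_div, div_mul_eq_mul_div, ← exp_add, ← exp_add]
    ring_nf
  have hright : EqOn (fun w => g (s - w) * exp (-(m * |w|)))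
      (fun w => exp s / 2 * exp (-(m + 1) * w)) (Ioi s) := fun w (hw : s < w) => by
    simp only [g, abs_of_pos (hs.trans_lt hw), abs_of_neg (sub_neg.2 hw)]
    rw [div_mul_eq_mul_div, div_mul_eq_mul_div, ← exp_add, ← exp_add]
    ring_nf
  rw [integral_eq_Iic_add_Ioc_add_Ioi (integrable_g_sub_mul_exp_neg_mul_abs (by linarith) s) hs,
    setIntegral_congr_fun measurableSet_Iic hleft, setIntegral_congr_fun measurableSet_Ioc hmid,
    setIntegral_congr_fun measurableSet_Ioi hright, integral_const_mul, integral_const_mul,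
    integral_const_mul, integral_exp_mul_Iic (by linarith), ← intervalIntegral.integral_of_le hs,
    integral_exp_mul_of_ne_zero (by linarith), integral_exp_mul_Ioi (by linarith)]
  have hmid_exp : exp (-s) * exp ((1 - m) * s) = exp (-(m * s)) := by rw [← exp_add]; ring_nf
  have hright_exp : exp s * exp (-(m + 1) * s) = exp (-(m * s)) := by rw [← exp_add]; ring_nf
  -- opaque atoms, so that `field_simp` cannot reorder the exponents
  generalize exp ((1 - m) * s) = P at hmid_exp ⊢
  generalize exp (-(m + 1) * s) = Q at hright_exp ⊢
  generalize exp (-(m * s)) = R at hmid_exp hright_exp ⊢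
  have h1 : 1 - m ≠ 0 := by linarith
  have h2 : m + 1 ≠ 0 := by linarith
  have h3 : m ^ 2 - 1 ≠ 0 := by nlinarith
  rw [mul_zero, mul_zero, exp_zero]
  field_simp
  linear_combination (m + 1) * (m ^ 2 - 1) * hmid_exp + (1 - m) * (m ^ 2 - 1) * hright_exp

theorem integral_g_sub_mul_exp_neg_mul_abs {m : ℝ} (hm : 1 < m) (s : ℝ) :
    ∫ w, g (s - w) * exp (-(m * |w|)) = (m * exp (-|s|) - exp (-(m * |s|))) / (m ^ 2 - 1) := by
  rcases le_total 0 s with hs | hs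
  · rw [abs_of_nonneg hs, integral_g_sub_mul_exp_neg_mul_abs_of_nonneg hm hs]
  · rw [abs_of_nonpos hs, ← integral_g_sub_mul_exp_neg_mul_abs_of_nonneg hm (neg_nonneg.2 hs),
      ← integral_neg_eq_self]
    congr 1
    funext w
    rw [g, g, show -s - w = -(s + w) by ring, abs_neg (s + w), sub_neg_eq_add, abs_neg w]

theorem integral_g_sub_mul_exp_neg_mul_abs_sub {m : ℝ} (hm : 1 < m) (z a : ℝ) :
    ∫ y, g (z - y) * exp (-(m * |y - a|)) =
      (m * exp (-|z - a|) - exp (-(m * |z - a|))) / (m ^ 2 - 1) := by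
  rw [← integral_g_sub_mul_exp_neg_mul_abs hm, ← integral_add_right_eq_self _ a]
  simp only [add_sub_cancel_right, sub_add_eq_sub_sub_swap]

theorem peakon_pow (n : ℕ) (c t y : ℝ) (k : ℕ) :
    peakon n c t y ^ k = (c ^ ((1 : ℝ) / n)) ^ k * exp (-(k * |y - c * t|)) := by
  rw [peakon, mul_pow, ← exp_nat_mul, mul_neg]

theorem rpow_one_div_natCast_pow_succ {n : ℕ} (hn : n ≠ 0) {c : ℝ} (hc : 0 ≤ c) :
    (c ^ ((1 : ℝ) / n)) ^ (n + 1) = c * c ^ ((1 : ℝ) / n) := by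
  rw [pow_succ, one_div, rpow_inv_natCast_pow hc hn]

theorem fPeakon_eq_of_ne {n : ℕ} (hn : 0 < n) {c t y : ℝ} (hy : y ≠ c * t) :
    fPeakon n c t y = n * (n + 2) / (n + 1) * peakon n c t y ^ (n + 1) := by
  have hsign : Real.sign (y - c * t) ^ 2 = 1 := by
    rcases Real.sign_apply_eq_of_ne_zero _ (sub_ne_zero.2 hy) with h | h <;> simp [h]
  have hpow : peakon n c t y ^ (n - 1) * peakon n c t y ^ 2 = peakon n c t y ^ (n + 1) := by
    rw [← pow_add, show n - 1 + 2 = n + 1 by omega]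
  rw [fPeakon, mul_pow, neg_sq, hsign, one_mul, mul_assoc _ (_ ^ (n - 1)), hpow]
  field_simp
  ring

theorem integral_g_sub_mul_fPeakon {n : ℕ} (hn : 0 < n) {c : ℝ} (hc : 0 < c) (t z : ℝ) :
    ∫ y, g (z - y) * fPeakon n c t y = c * peakon n c t z - peakon n c t z ^ (n + 1) / (n + 1) := by
  have hm : (1 : ℝ) < n + 1 := by norm_cast; omega
  have hae : ∀ᵐ y, g (z - y) * fPeakon n c t y =
      n * (n + 2) / (n + 1) * (c ^ ((1 : ℝ) / n)) ^ (n + 1) *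
        (g (z - y) * exp (-((n + 1 : ℝ) * |y - c * t|))) := by
    filter_upwards [Measure.ae_ne volume (c * t)] with y hy
    rw [fPeakon_eq_of_ne hn hy, peakon_pow]
    push_cast
    ring
  rw [integral_congr_ae hae, integral_const_mul, integral_g_sub_mul_exp_neg_mul_abs_sub hm,
    peakon_pow, peakon, rpow_one_div_natCast_pow_succ hn.ne' hc.le]
  push_cast
  generalize exp (-|z - c * t|) = e₁
  generalize exp (-((n + 1 : ℝ) * |z - c * t|)) = e₂
  have hn0 : (n : ℝ) ≠ 0 := by positivity
  have hm0 : ((n : ℝ) + 1) ^ 2 - 1 ≠ 0 := by nlinarith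
  field_simp
  ring

theorem hasDerivAt_exp_neg_abs {s : ℝ} (hs : s ≠ 0) :
    HasDerivAt (fun r => exp (-|r|)) (-SignType.sign s * exp (-|s|)) s :=
  (hasDerivAt_abs hs).neg.exp.congr_deriv (mul_comm _ _)

theorem hasDerivAt_peakon_space (n : ℕ) {c t x : ℝ} (hx : x ≠ c * t) :
    HasDerivAt (fun y => peakon n c t y)
      (-SignType.sign (x - c * t) * peakon n c t x) x := by
  refine (((hasDerivAt_exp_neg_abs (sub_ne_zero.2 hx)).comp x
    ((hasDerivAt_id x).sub_const (c * t))).const_mul (c ^ ((1 : ℝ) / n))).congr_deriv ?_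
  rw [peakon]
  ring

theorem hasDerivAt_peakon_time (n : ℕ) {c t x : ℝ} (hx : x ≠ c * t) :
    HasDerivAt (fun s => peakon n c s x)
      (c * SignType.sign (x - c * t) * peakon n c t x) t := by
  refine (((hasDerivAt_exp_neg_abs (sub_ne_zero.2 hx)).comp t
    (((hasDerivAt_id t).const_mul c).const_sub x)).const_mul (c ^ ((1 : ℝ) / n))).congr_deriv ?_
  rw [peakon]
  ring

/-- Away from its crest `x = ct`, the peakon satisfies the nonlocal form
of (CH_n): `u_t + uⁿ u_x + ∂ₓ(g ∗ f_t) = 0`. -/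
theorem peakon_solves_nonlocal_form
    (n : ℕ) (hn : 0 < n) (c : ℝ) (hc : 0 < c) :
    ∀ t x : ℝ, x ≠ c * t →
      DifferentiableAt ℝ (fun s => peakon n c s x) t ∧
      DifferentiableAt ℝ (fun y => peakon n c t y) x ∧
      DifferentiableAt ℝ (fun z => ∫ y : ℝ, g (z - y) * fPeakon n c t y) x ∧
      deriv (fun s => peakon n c s x) t
        + peakon n c t x ^ n * deriv (fun y => peakon n c t y) x
        + deriv (fun z => ∫ y : ℝ, g (z - y) * fPeakon n c t y) x = 0 := by
  intro t x hx
  have hu_t := hasDerivAt_peakon_time n hx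
  have hu_x := hasDerivAt_peakon_space n hx
  have hconv : HasDerivAt (fun z => ∫ y : ℝ, g (z - y) * fPeakon n c t y)
      (c * (-SignType.sign (x - c * t) * peakon n c t x) - ((n + 1 : ℕ) * peakon n c t x ^ n *
        (-SignType.sign (x - c * t) * peakon n c t x)) / (n + 1)) x := by
    simp_rw [integral_g_sub_mul_fPeakon hn hc]
    exact (hu_x.const_mul c).sub ((hu_x.pow (n + 1)).div_const _)
  refine ⟨hu_t.differentiableAt, hu_x.differentiableAt, hconv.differentiableAt, ?_⟩
  rw [hu_t.deriv, hu_x.deriv, hconv.deriv]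
  push_cast
  field_simp
  ring
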